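/- Let G be a finite connected graph with an edge e = (v,w), and let G' be obtained from G by subdividing e: replace e by two edges (v,u) and (u,w) where u is a new vertex. Then for any vertex s of G, the number of s-rooted acyclic orientations of G is at most the number of s-rooted acyclic orientations of G'. -/

import Mathlib

/-- An acyclic orientation of a simple graph: each edge gets exactly one direction,
and there are no directed cycles. -/
structure AcyclicOrientation {V : Type*} (G : SimpleGraph V) where
  dir : V → V → Prop
  adj_of_dir : ∀ a b, dir a b → G.Adj a b
  total : ∀ a b, G.Adj a b → dir a b ∨ dir b a
  asymm : ∀ a b, dir a b → ¬ dir b a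
  acyclic : ∀ v, ¬ Relation.TransGen dir v v

/-- `s` is a target: all incident edges are directed towards `s`. -/
def AcyclicOrientation.IsTarget {V : Type*} {G : SimpleGraph V}
    (o : AcyclicOrientation G) (s : V) : Prop :=
  ∀ a, G.Adj a s → o.dir a s

/-- `s` is a source: all incident edges are directed away from `s`. -/
def AcyclicOrientation.IsSource {V : Type*} {G : SimpleGraph V}
    (o : AcyclicOrientation G) (s : V) : Prop :=
  ∀ a, G.Adj s a → o.dir s a

/-- An `s`-rooted acyclic orientation: `s` is the unique target. -/
def AcyclicOrientation.IsRooted {V : Type*} {G : SimpleGraph V}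
    (o : AcyclicOrientation G) (s : V) : Prop :=
  o.IsTarget s ∧ ∀ t, o.IsTarget t → t = s

/-- The number of `s`-rooted acyclic orientations of `G`. -/
noncomputable def rootedCount {V : Type*} (G : SimpleGraph V) (s : V) : ℕ :=
  Nat.card {o : AcyclicOrientation G // o.IsRooted s}

/-- Subdivide the edge `(v, w)` of `G`: remove it and add a new vertex (`none`)
adjacent to exactly `v` and `w`. -/
def subdivide {V : Type*} (G : SimpleGraph V) (v w : V) : SimpleGraph (Option V) where
  Adj a b :=
    (∃ x y : V, a = some x ∧ b = some y ∧ G.Adj x y ∧ ¬(x = v ∧ y = w) ∧ ¬(x = w ∧ y = v)) ∨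
    (a = none ∧ (b = some v ∨ b = some w)) ∨
    (b = none ∧ (a = some v ∨ a = some w))
  symm := by
    constructor
    rintro a b (⟨x, y, rfl, rfl, hxy, h1, h2⟩ | ⟨rfl, hb⟩ | ⟨rfl, ha⟩)
    · exact Or.inl ⟨y, x, rfl, rfl, hxy.symm,
        fun h => h2 ⟨h.2, h.1⟩, fun h => h1 ⟨h.2, h.1⟩⟩
    · exact Or.inr (Or.inr ⟨rfl, hb⟩)
    · exact Or.inr (Or.inl ⟨rfl, ha⟩)
  loopless := by
    constructor
    rintro a (⟨x, y, rfl, hy, hxy, -, -⟩ | ⟨rfl, h⟩ | ⟨rfl, h⟩)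
    · obtain rfl : x = y := Option.some.inj hy
      exact hxy.ne rfl
    all_goals simp at h

/-
Orient the path `v – u – w` of the subdivision in the direction of the edge `vw` and keep all
other edges. This sends acyclic orientations of `G` injectively to acyclic orientations of the
subdivision: a directed cycle through `u` would pass `v → u → w` (or back) and contract to a
directed cycle of `G`. The new vertex `u` is not a target, and a vertex of `G` is a target
after subdivision iff it was one before, so `s`-rooted orientations go to `s`-rooted ones.
-/

open Relation

theorem Relation.not_transGen_self_of_map {α β : Type*} {r : α → α → Prop}
    {p : β → β → Prop} [IsTrans β p] [Std.Irrefl p] (f : α → β)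
    (h : ∀ a b, r a b → p (f a) (f b)) (a : α) :
    ¬ TransGen r a a := fun hr =>
  irrefl (f a) (transGen_eq_self (r := p) ▸ hr.lift f h)

section Subdivide

variable {V : Type*} {G : SimpleGraph V} {v w a b : V}

@[simp]
theorem subdivide_adj_some_some :
    (subdivide G v w).Adj (some a) (some b) ↔ G.Adj a b ∧ s(a, b) ≠ s(v, w) := by
  simp [subdivide]

@[simp]
theorem subdivide_adj_none_some : (subdivide G v w).Adj none (some b) ↔ b ∈ s(v, w) := by
  simp [subdivide]

@[simp]
theorem subdivide_adj_some_none : (subdivide G v w).Adj (some a) none ↔ a ∈ s(v, w) := by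
  rw [SimpleGraph.adj_comm, subdivide_adj_none_some]

theorem exists_adj_of_mem_sym2 (hvw : G.Adj v w) (hb : b ∈ s(v, w)) :
    ∃ a, s(b, a) = s(v, w) ∧ G.Adj b a := by
  obtain ⟨a, ha⟩ := Sym2.mem_iff_exists.mp hb
  exact ⟨a, ha.symm, by rwa [← SimpleGraph.mem_edgeSet, ← ha]⟩

end Subdivide

namespace AcyclicOrientation

variable {V : Type*} {G : SimpleGraph V}

theorem ext {o₁ o₂ : AcyclicOrientation G} (h : o₁.dir = o₂.dir) : o₁ = o₂ := by
  cases o₁; cases o₂; cases h; rfl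

instance {W : Type*} [Finite W] (H : SimpleGraph W) : Finite (AcyclicOrientation H) :=
  Finite.of_injective dir fun _ _ => ext

def subdivideDir (o : AcyclicOrientation G) (v w : V) : Option V → Option V → Prop
  | some a, some b => o.dir a b ∧ s(a, b) ≠ s(v, w)
  | some a, none => ∃ b, s(a, b) = s(v, w) ∧ o.dir a b
  | none, some b => ∃ a, s(a, b) = s(v, w) ∧ o.dir a b
  | none, none => False

open Classical in
noncomputable def head (o : AcyclicOrientation G) (v w : V) : V :=
  if o.dir v w then w else v

variable (o : AcyclicOrientation G) {v w a b : V}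

theorem head_eq_of_dir (he : s(a, b) = s(v, w)) (hab : o.dir a b) : o.head v w = b := by
  rcases Sym2.eq_iff.mp he with ⟨rfl, rfl⟩ | ⟨rfl, rfl⟩
  · exact if_pos hab
  · exact if_neg (o.asymm _ _ hab)

/-- Ranking the new vertex `none` just below the head of `vw` turns every arc of the subdivided
orientation into a step of the lexicographic order on (vertex of `G`, is old). -/
theorem subdivideDir_lex (x y : Option V) (h : o.subdivideDir v w x y) :
    Prod.Lex (TransGen o.dir) (· < ·)
      (x.getD (o.head v w), x.isSome)
      (y.getD (o.head v w), y.isSome) := by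
  match x, y, h with
  | some a, some b, ⟨hab, _⟩ => exact .left _ _ (.single hab)
  | some a, none, ⟨b, he, hab⟩ =>
    simpa [o.head_eq_of_dir he hab] using Prod.Lex.left _ _ (TransGen.single hab)
  | none, some b, ⟨a, he, hab⟩ =>
    simpa [o.head_eq_of_dir he hab] using
      Prod.Lex.right (ra := TransGen o.dir) b Bool.false_lt_true

def subdivide (hvw : G.Adj v w) : AcyclicOrientation (_root_.subdivide G v w) where
  dir := o.subdivideDir v w
  adj_of_dir
    | some a, some b, ⟨hab, hne⟩ => subdivide_adj_some_some.mpr ⟨o.adj_of_dir a b hab, hne⟩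
    | some a, none, ⟨b, he, _⟩ => subdivide_adj_some_none.mpr (he ▸ Sym2.mem_mk_left a b)
    | none, some b, ⟨a, he, _⟩ => subdivide_adj_none_some.mpr (he ▸ Sym2.mem_mk_right a b)
  total
    | some a, some b, h => by
      obtain ⟨hab, hne⟩ := subdivide_adj_some_some.mp h
      exact (o.total a b hab).imp (⟨·, hne⟩) (⟨·, by rwa [Sym2.eq_swap]⟩)
    | some a, none, h => by
      obtain ⟨b, he, hab⟩ := exists_adj_of_mem_sym2 hvw (subdivide_adj_some_none.mp h)
      exact (o.total a b hab).imp (⟨b, he, ·⟩) (⟨b, by rwa [Sym2.eq_swap], ·⟩)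
    | none, some b, h => by
      obtain ⟨a, he, hba⟩ := exists_adj_of_mem_sym2 hvw (subdivide_adj_none_some.mp h)
      exact (o.total a b hba.symm).imp (⟨a, by rwa [Sym2.eq_swap], ·⟩) (⟨a, he, ·⟩)
  asymm
    | some a, some b, ⟨hab, _⟩, ⟨hba, _⟩ => o.asymm a b hab hba
    | some a, none, ⟨b, he, hab⟩, ⟨b', he', hba⟩ => by
      obtain rfl : b' = b := Sym2.congr_right.mp ((Sym2.eq_swap.trans he').trans he.symm)
      exact o.asymm a b' hab hba
    | none, some b, ⟨a, he, hab⟩, ⟨a', he', hba⟩ => by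
      obtain rfl : a' = a := Sym2.congr_left.mp ((Sym2.eq_swap.trans he').trans he.symm)
      exact o.asymm a' b hab hba
  acyclic :=
    haveI : Std.Irrefl (TransGen o.dir) := ⟨o.acyclic⟩
    not_transGen_self_of_map _ o.subdivideDir_lex

variable {o}

theorem dir_iff_subdivideDir :
    o.dir a b ↔ o.subdivideDir v w (some a) (some b) ∨
      s(a, b) = s(v, w) ∧ o.subdivideDir v w (some a) none := by
  constructor
  · intro hab
    by_cases he : s(a, b) = s(v, w)
    · exact .inr ⟨he, b, he, hab⟩
    · exact .inl ⟨hab, he⟩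
  · rintro (⟨hab, -⟩ | ⟨he, b', he', hab'⟩)
    · exact hab
    · rwa [Sym2.congr_right.mp (he.trans he'.symm)]

theorem subdivide_injective (hvw : G.Adj v w) :
    Function.Injective fun o : AcyclicOrientation G => o.subdivide hvw := by
  intro o₁ o₂ h
  have hdir : o₁.subdivideDir v w = o₂.subdivideDir v w := congrArg dir h
  refine ext (funext₂ fun a b => propext ?_)
  rw [dir_iff_subdivideDir, dir_iff_subdivideDir, hdir]

theorem not_isTarget_subdivide_none (hvw : G.Adj v w) : ¬ (o.subdivide hvw).IsTarget none := by
  intro h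
  obtain ⟨b, hb, hvb⟩ := h (some v) (subdivide_adj_some_none.mpr (Sym2.mem_mk_left v w))
  obtain ⟨a, ha, hwa⟩ := h (some w) (subdivide_adj_some_none.mpr (Sym2.mem_mk_right v w))
  obtain rfl := Sym2.congr_right.mp hb
  obtain rfl := Sym2.congr_right.mp (ha.trans Sym2.eq_swap)
  exact o.asymm _ _ hvb hwa

theorem isTarget_subdivide_some_iff (hvw : G.Adj v w) {t : V} :
    (o.subdivide hvw).IsTarget (some t) ↔ o.IsTarget t := by
  constructor
  · intro h a hat
    by_cases he : s(a, t) = s(v, w)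
    · obtain ⟨a', he', hat'⟩ :=
        h none (subdivide_adj_none_some.mpr (he ▸ Sym2.mem_mk_right a t))
      rwa [Sym2.congr_left.mp (he.trans he'.symm)]
    · exact (h (some a) (subdivide_adj_some_some.mpr ⟨hat, he⟩)).1
  · rintro h (_ | a) hadj
    · obtain ⟨a, he, hta⟩ := exists_adj_of_mem_sym2 hvw (subdivide_adj_none_some.mp hadj)
      exact ⟨a, by rwa [Sym2.eq_swap], h a hta.symm⟩
    · obtain ⟨hat, hne⟩ := subdivide_adj_some_some.mp hadj
      exact ⟨h a hat, hne⟩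

theorem IsRooted.subdivide (hvw : G.Adj v w) {s : V} (hs : o.IsRooted s) :
    (o.subdivide hvw).IsRooted (some s) := by
  refine ⟨(isTarget_subdivide_some_iff hvw).mpr hs.1, ?_⟩
  rintro (_ | t) ht
  · exact absurd ht (not_isTarget_subdivide_none hvw)
  · exact congrArg some (hs.2 t ((isTarget_subdivide_some_iff hvw).mp ht))

end AcyclicOrientation

theorem rootedCount_le_subdivide_general {V : Type*} [Finite V] (G : SimpleGraph V)
    (v w : V) (hvw : G.Adj v w) (s : V) :
    rootedCount G s ≤ rootedCount (subdivide G v w) (some s) :=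
  Nat.card_le_card_of_injective (fun o => ⟨o.1.subdivide hvw, o.2.subdivide hvw⟩)
    fun _ _ h => Subtype.ext (AcyclicOrientation.subdivide_injective hvw (congrArg Subtype.val h))

/-- Subdividing an edge does not decrease the number of `s`-rooted acyclic
orientations. -/
theorem rootedCount_le_subdivide {V : Type*} [Finite V] (G : SimpleGraph V)
    (hG : G.Connected) (v w : V) (hvw : G.Adj v w) (s : V) :
    rootedCount G s ≤ rootedCount (subdivide G v w) (some s) :=
  rootedCount_le_subdivide_general G v w hvw s
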